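/- Let (S,≤) be a partially ordered set, S' an isolated suborder of (S,≤), and C a closure system of (S,≤). Let Q be the set of equivalence classes of ≡_{S'} partially ordered by ≤_{S'}. Then: (1) if C ∩ S' = ∅, the set {{c} | c ∈ C} of singletons of elements of C is a closure system of (Q, ≤_{S'}); (2) if C ∩ S' ≠ ∅, the set {{c} | c ∈ C \ S'} ∪ {S'} is a closure system of (Q, ≤_{S'}). -/

import Mathlib

/-- `S'` is an *isolated suborder* of the partially ordered set. -/
def IsIsolatedSuborder {α : Type*} [PartialOrder α] (S' : Set α) : Prop :=
  ∃ b t, IsLeast S' b ∧ IsGreatest S' t ∧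
    ∀ x ∉ S', ∀ y ∈ S', (y ≤ x → t ≤ x) ∧ (x ≤ y → x ≤ b)

/-- The equivalence class of `x` under `≡_{S'}`. -/
def eqClass {α : Type*} (S' : Set α) (x : α) : Set α :=
  {y | (x ∈ S' ∧ y ∈ S') ∨ (x ∉ S' ∧ y = x)}

/-- The set of equivalence classes of `≡_{S'}`. -/
def quotClasses {α : Type*} (S' : Set α) : Set (Set α) :=
  Set.range (eqClass S')

/-- The quotient relation on equivalence classes. -/
def qle {α : Type*} [PartialOrder α] (A B : Set α) : Prop :=
  ∃ a ∈ A, ∃ b ∈ B, a ≤ b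

/-- `b` is the least element of `A` with respect to the relation `r`. -/
def IsLeastRel {β : Type*} (r : β → β → Prop) (A : Set β) (b : β) : Prop :=
  b ∈ A ∧ ∀ y ∈ A, r b y

/-- `t` is the greatest element of `A` with respect to the relation `r`. -/
def IsGreatestRel {β : Type*} (r : β → β → Prop) (A : Set β) (t : β) : Prop :=
  t ∈ A ∧ ∀ y ∈ A, r y t

/-- `S'` is an isolated suborder of the ordered set with carrier `carrier` and
order relation `r`. -/
def IsIsolatedSuborderRel {β : Type*} (r : β → β → Prop) (carrier S' : Set β) : Prop :=
  S' ⊆ carrier ∧ ∃ b t, IsLeastRel r S' b ∧ IsGreatestRel r S' t ∧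
    ∀ x ∈ carrier, x ∉ S' → ∀ y ∈ S', (r y x → r t x) ∧ (r x y → r x b)

/-- A subset `C` of a partially ordered set is a *closure system* if for every `s`
the set of elements of `C` majorizing `s` has a least element. -/
def IsClosureSystem {α : Type*} [PartialOrder α] (C : Set α) : Prop :=
  ∀ s : α, ∃ m, IsLeast {c ∈ C | s ≤ c} m

/-- `C` is a closure system of the ordered set with carrier `carrier` and order
relation `r`: `C ⊆ carrier`, and every element of the carrier has a least
majorizing element in `C`. -/
def IsClosureSystemRel {β : Type*} (r : β → β → Prop) (carrier C : Set β) : Prop :=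
  C ⊆ carrier ∧ ∀ s ∈ carrier, ∃ m, (m ∈ C ∧ r s m) ∧ ∀ c ∈ C, r s c → r m c


/-!
The classes of `≡_{S'}` that meet `C` are exactly the closure system described in both cases,
so it suffices to show that `eqClass S' '' C` is a closure system of the quotient. The closure
of a class `X` is the class of the `C`-closure of a well-chosen representative `s ∈ X`: for
`X = {x}` take `x` itself, and for `X = S'` take an element of `C ∩ S'` if there is one. Isolation
of `S'` guarantees that every class of an element of `C` lying above `X` contains an element of
`C` lying above `s`.
-/

section EqClass

variable {α : Type*} (S' : Set α)

lemma eqClass_of_mem {x : α} (hx : x ∈ S') : eqClass S' x = S' := by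
  ext y; simp [eqClass, hx]

lemma eqClass_of_notMem {x : α} (hx : x ∉ S') : eqClass S' x = {x} := by
  ext y; simp [eqClass, hx]

lemma mem_eqClass_self (x : α) : x ∈ eqClass S' x := by
  by_cases hx : x ∈ S'
  · simpa [eqClass_of_mem S' hx]
  · simp [eqClass_of_notMem S' hx]

variable {S'} {C : Set α}

lemma image_eqClass_of_inter_eq_empty (h : C ∩ S' = ∅) :
    eqClass S' '' C = (fun c => ({c} : Set α)) '' C :=
  Set.image_congr fun _ hc => eqClass_of_notMem S' fun hc' => h.subset ⟨hc, hc'⟩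

lemma image_eqClass_of_inter_nonempty (h : (C ∩ S').Nonempty) :
    eqClass S' '' C = insert S' ((fun c => ({c} : Set α)) '' (C \ S')) := by
  have hin : eqClass S' '' (C ∩ S') = {S'} :=
    (Set.image_congr fun _ hc => eqClass_of_mem S' hc.2).trans (h.image_const S')
  have hout : eqClass S' '' (C \ S') = (fun c => ({c} : Set α)) '' (C \ S') :=
    Set.image_congr fun _ hc => eqClass_of_notMem S' hc.2
  rw [← Set.inter_union_sdiff C S', Set.image_union, hin, hout, Set.insert_eq,
    Set.inter_union_sdiff]

end EqClass

section Representatives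

variable {α : Type*} [PartialOrder α] {S' C : Set α}

def RepresentsUpperBounds (S' C X : Set α) (s : α) : Prop :=
  s ∈ X ∧ ∀ c ∈ C, qle X (eqClass S' c) → ∃ c' ∈ C ∩ eqClass S' c, s ≤ c'

lemma isClosureSystemRel_image_eqClass_of_representsUpperBounds (hC : IsClosureSystem C)
    (hrep : ∀ X ∈ quotClasses S', ∃ s, RepresentsUpperBounds S' C X s) :
    IsClosureSystemRel qle (quotClasses S') (eqClass S' '' C) := by
  refine ⟨Set.image_subset_range _ _, fun X hX => ?_⟩
  obtain ⟨s, hsX, hup⟩ := hrep X hX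
  obtain ⟨m, ⟨hmC, hsm⟩, hmin⟩ := hC s
  refine ⟨eqClass S' m, ⟨⟨m, hmC, rfl⟩, s, hsX, m, mem_eqClass_self S' m, hsm⟩, ?_⟩
  rintro _ ⟨c, hc, rfl⟩ hXc
  obtain ⟨c', ⟨hc'C, hc'c⟩, hsc'⟩ := hup c hc hXc
  exact ⟨m, mem_eqClass_self S' m, c', hc'c, hmin ⟨hc'C, hsc'⟩⟩

end Representatives

namespace IsIsolatedSuborder

variable {α : Type*} [PartialOrder α] {S' : Set α}

lemma le_of_mem_of_le (hS' : IsIsolatedSuborder S') {x y z : α} (hx : x ∉ S') (hy : y ∈ S')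
    (hyx : y ≤ x) (hz : z ∈ S') : z ≤ x := by
  obtain ⟨_, t, _, ht, hiso⟩ := hS'
  exact (ht.2 hz).trans ((hiso x hx y hy).1 hyx)

lemma le_of_le_of_mem (hS' : IsIsolatedSuborder S') {x y z : α} (hx : x ∉ S') (hy : y ∈ S')
    (hxy : x ≤ y) (hz : z ∈ S') : x ≤ z := by
  obtain ⟨b, _, hb, _, hiso⟩ := hS'
  exact ((hiso x hx y hy).2 hxy).trans (hb.2 hz)

variable {C : Set α}

lemma representsUpperBounds_singleton (hS' : IsIsolatedSuborder S') {x : α} (hx : x ∉ S') :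
    RepresentsUpperBounds S' C {x} x := by
  refine ⟨rfl, fun c hcC hxc => ⟨c, ⟨hcC, mem_eqClass_self S' c⟩, ?_⟩⟩
  obtain ⟨_, rfl, y, hy, hxy⟩ := hxc
  by_cases hc : c ∈ S'
  · rw [eqClass_of_mem S' hc] at hy
    exact hS'.le_of_le_of_mem hx hy hxy hc
  · rw [eqClass_of_notMem S' hc, Set.mem_singleton_iff] at hy
    exact hy ▸ hxy

lemma exists_representsUpperBounds_self (hS' : IsIsolatedSuborder S') :
    ∃ s, RepresentsUpperBounds S' C S' s := by
  -- Any `s ∈ S'` handles the classes outside `S'`; for `S'` itself it has to lie in `C`.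
  obtain ⟨s, hsS', hsC⟩ : ∃ s ∈ S', (C ∩ S').Nonempty → s ∈ C := by
    by_cases hCS' : (C ∩ S').Nonempty
    · exact ⟨hCS'.some, hCS'.some_mem.2, fun _ => hCS'.some_mem.1⟩
    · obtain ⟨b, -, hb, -⟩ := hS'
      exact ⟨b, hb.1, fun h => absurd h hCS'⟩
  refine ⟨s, hsS', fun c hcC hSc => ?_⟩
  by_cases hc : c ∈ S'
  · exact ⟨s, ⟨hsC ⟨c, hcC, hc⟩, by rwa [eqClass_of_mem S' hc]⟩, le_rfl⟩
  · rw [eqClass_of_notMem S' hc] at hSc ⊢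
    obtain ⟨y, hy, c', hc', hyc⟩ := hSc
    rw [Set.mem_singleton_iff.mp hc'] at hyc
    exact ⟨c, ⟨hcC, rfl⟩, hS'.le_of_mem_of_le hc hy hyc hsS'⟩

lemma isClosureSystemRel_image_eqClass (hS' : IsIsolatedSuborder S') (hC : IsClosureSystem C) :
    IsClosureSystemRel qle (quotClasses S') (eqClass S' '' C) := by
  refine isClosureSystemRel_image_eqClass_of_representsUpperBounds hC ?_
  rintro _ ⟨x, rfl⟩
  by_cases hx : x ∈ S'
  · rw [eqClass_of_mem S' hx]
    exact hS'.exists_representsUpperBounds_self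
  · rw [eqClass_of_notMem S' hx]
    exact ⟨x, hS'.representsUpperBounds_singleton hx⟩

end IsIsolatedSuborder

/-- A closure system `C` of `(S,≤)` induces a closure system of the quotient by an
isolated suborder `S'`: the singletons of `C` if `C ∩ S' = ∅`, and the singletons
of `C \ S'` together with `S'` otherwise. -/
theorem closureSystem_in_quotient {α : Type*} [PartialOrder α] (S' : Set α)
    (hS' : IsIsolatedSuborder S') (C : Set α) (hC : IsClosureSystem C) :
    (C ∩ S' = ∅ →
      IsClosureSystemRel qle (quotClasses S') ((fun c => ({c} : Set α)) '' C)) ∧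
    (C ∩ S' ≠ ∅ →
      IsClosureSystemRel qle (quotClasses S')
        (insert S' ((fun c => ({c} : Set α)) '' (C \ S')))) := by
  have hquot := hS'.isClosureSystemRel_image_eqClass hC
  refine ⟨fun h => ?_, fun h => ?_⟩
  · rwa [image_eqClass_of_inter_eq_empty h] at hquot
  · rwa [image_eqClass_of_inter_nonempty (Set.nonempty_iff_ne_empty.mpr h)] at hquot
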